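/- arXiv:2008.06172 — 2 statements merged into one kernel-verified Lean document; each statement's English description precedes it below -/
import Mathlib

section
/- Let V be a finite-dimensional vector space and P : V* → V a skew linear isomorphism (α(P(β)) = -β(P(α)) for all α, β). Let W ⊆ V be a subspace with V = W ⊕ P(W°). Define P_W : W* → W by P_W(α) = P(α̃), where α̃ ∈ V* is the unique extension of α ∈ W* annihilating P(W°). Then P_W is well-defined (its values lie in W), skew, and a linear isomorphism W* → W. -/
/-!
Skewness of `P` gives `γ (P α) = - α (P γ)`, so `P α` lies in `W = (W°)⊥` exactly when `α`
annihilates `P(W°)`. The extension of `a ∈ W*` by zero on `P(W°)` is `a ∘ π`, with `π` the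
projection onto `W` along `P(W°)`; hence `P_W a = P (a ∘ π)` lands in `W`, and skewness and
bijectivity of `P_W` are inherited from `P`.
-/

open Module

namespace Submodule

variable {R E : Type*} [CommRing R] [AddCommGroup E] [Module R E] {p q : Submodule R E}

theorem dualMap_projectionOnto_apply_coe (h : IsCompl p q) (a : Dual R p) (x : p) :
    (p.projectionOnto q h).dualMap a x = a x := by
  simp

theorem dualMap_projectionOnto_apply_of_mem_right (h : IsCompl p q) (a : Dual R p) {v : E}
    (hv : v ∈ q) : (p.projectionOnto q h).dualMap a v = 0 := by
  simp [projectionOnto_apply_of_mem_right h hv]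

theorem dualMap_projectionOnto_comp_subtype (h : IsCompl p q) {α : Dual R E}
    (hα : ∀ v ∈ q, α v = 0) : (p.projectionOnto q h).dualMap (α ∘ₗ p.subtype) = α := by
  ext v
  have hv := hα _ (sub_projection_mem h v)
  rw [map_sub, sub_eq_zero] at hv
  exact hv.symm

theorem dualMap_projectionOnto_injective (h : IsCompl p q) :
    Function.Injective (p.projectionOnto q h).dualMap :=
  LinearMap.dualMap_injective_of_surjective (projectionOnto_surjective h)

end Submodule

open Submodule

theorem mem_iff_forall_map_dualAnnihilator_apply_eq_zero {K V : Type*} [Field K]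
    [AddCommGroup V] [Module K V] {P : Dual K V →ₗ[K] V}
    (hP : ∀ α β : Dual K V, α (P β) = - β (P α)) (W : Submodule K V) (α : Dual K V) :
    P α ∈ W ↔ ∀ v ∈ W.dualAnnihilator.map P, α v = 0 := by
  conv_lhs => rw [← Subspace.dualAnnihilator_dualCoannihilator_eq (W := W)]
  simp only [mem_dualCoannihilator, mem_map, forall_exists_index, and_imp,
    forall_apply_eq_imp_iff₂, hP _ α, neg_eq_zero]

theorem stmt5_general {K V : Type*} [Field K] [AddCommGroup V] [Module K V]
    (P : Module.Dual K V →ₗ[K] V) (hbij : Function.Bijective P)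
    (hP : ∀ α β : Module.Dual K V, α (P β) = - β (P α))
    (W : Submodule K V) (hcompl : IsCompl W (W.dualAnnihilator.map P)) :
    ∃ Q : Module.Dual K W →ₗ[K] W,
      (∀ α : Module.Dual K V, (∀ v ∈ W.dualAnnihilator.map P, α v = 0) →
        (Q (α.comp W.subtype) : V) = P α) ∧
      (∀ a b : Module.Dual K W, a (Q b) = - b (Q a)) ∧
      Function.Bijective Q := by
  set extend := (W.projectionOnto _ hcompl).dualMap
  have hmem (a : Dual K W) : P (extend a) ∈ W :=
    (mem_iff_forall_map_dualAnnihilator_apply_eq_zero hP W _).2 fun _ hv ↦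
      dualMap_projectionOnto_apply_of_mem_right hcompl a hv
  have hext (α : Dual K V) (hα : ∀ v ∈ W.dualAnnihilator.map P, α v = 0) :
      extend (α ∘ₗ W.subtype) = α :=
    dualMap_projectionOnto_comp_subtype hcompl hα
  refine ⟨(P ∘ₗ extend).codRestrict W hmem, fun α hα ↦ ?_,
    fun a b ↦ ?_, ?_, fun w ↦ ?_⟩
  · simp [hext α hα]
  · rw [← dualMap_projectionOnto_apply_coe hcompl a,
      ← dualMap_projectionOnto_apply_coe hcompl b]
    exact hP (extend a) (extend b)
  · intro a b hab
    exact dualMap_projectionOnto_injective hcompl (hbij.1 (congrArg Subtype.val hab))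
  · obtain ⟨α, hαw⟩ := hbij.2 w
    have hα := (mem_iff_forall_map_dualAnnihilator_apply_eq_zero hP W α).1 (hαw ▸ w.2)
    exact ⟨α ∘ₗ W.subtype, Subtype.ext (by simp [hext α hα, hαw])⟩

theorem stmt5 {K V : Type*} [Field K] [AddCommGroup V] [Module K V] [FiniteDimensional K V]
    (P : Module.Dual K V →ₗ[K] V) (hbij : Function.Bijective P)
    (hP : ∀ α β : Module.Dual K V, α (P β) = - β (P α))
    (W : Submodule K V) (hcompl : IsCompl W (W.dualAnnihilator.map P)) :
    ∃ Q : Module.Dual K W →ₗ[K] W,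
      (∀ α : Module.Dual K V, (∀ v ∈ W.dualAnnihilator.map P, α v = 0) →
        (Q (α.comp W.subtype) : V) = P α) ∧
      (∀ a b : Module.Dual K W, a (Q b) = - b (Q a)) ∧
      Function.Bijective Q :=
  stmt5_general P hbij hP W hcompl
end

section
/- Let V₁, V₂ be finite-dimensional vector spaces, φ : V₁ → V₂ a linear map, and P₁ : V₁* → V₁, P₂ : V₂* → V₂ skew linear maps satisfying φ ∘ P₁ ∘ φ* = P₂, where φ* : V₂* → V₁* is the dual map. If W ⊆ V₂ is a subspace with V₂ = W ⊕ P₂(W°), then V₁ = φ⁻¹(W) ⊕ P₁((φ⁻¹(W))°), and the codimension of φ⁻¹(W) in V₁ equals the codimension of W in V₂. -/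
/-!
Write `U = φ⁻¹(W)`. Decomposing `φ x = w + P₂ β` with `β ∈ W°` gives
`x = (x - P₁ (φ* β)) + P₁ (φ* β)` with the first summand in `U` and `φ* β ∈ U°`, so
`U + P₁(U°) = V₁`; skewness of `P₁` then forces this sum to be direct. The same identity shows
`P₂(W°) ⊆ im φ`, so `V₁ → V₂ ⧸ W` is surjective with kernel `U`, which gives the codimensions.
-/

namespace Submodule

variable {R M N : Type*} [CommRing R] [AddCommGroup M] [Module R M] [AddCommGroup N] [Module R N]

theorem isCompl_map_dualAnnihilator_of_codisjoint {P : Module.Dual R M →ₗ[R] M}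
    (hP : ∀ α β : Module.Dual R M, α (P β) = -β (P α)) {U : Submodule R M}
    (hU : Codisjoint U (U.dualAnnihilator.map P)) :
    IsCompl U (U.dualAnnihilator.map P) := by
  refine ⟨disjoint_def.mpr ?_, hU⟩
  rintro _ hαU ⟨α, hα, rfl⟩
  suffices α = 0 by simp [this]
  ext y
  obtain ⟨u, hu, _, ⟨β, hβ, rfl⟩, rfl⟩ := mem_sup.mp (hU.eq_top ▸ mem_top : y ∈ U ⊔ _)
  rw [SetLike.mem_coe, mem_dualAnnihilator] at hα hβ
  -- `α (P β) = -β (P α)` vanishes because `P α ∈ U`.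
  simp [hα u hu, hP α β, hβ _ hαU]

theorem finrank_quotient_comap_eq_of_codisjoint {f : M →ₗ[R] N} {W : Submodule R N}
    (hW : Codisjoint W (LinearMap.range f)) :
    Module.finrank R (M ⧸ W.comap f) = Module.finrank R (N ⧸ W) := by
  have hsurj : Function.Surjective (W.mkQ ∘ₗ f) := by
    rintro ⟨y⟩
    obtain ⟨w, hw, _, ⟨x, rfl⟩, rfl⟩ := mem_sup.mp (hW.eq_top ▸ mem_top : y ∈ W ⊔ _)
    exact ⟨x, (Quotient.eq W).mpr (by simpa using hw)⟩
  have hker : LinearMap.ker (W.mkQ ∘ₗ f) = W.comap f := by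
    rw [LinearMap.ker_comp, ker_mkQ]
  exact (hker ▸ (W.mkQ ∘ₗ f).quotKerEquivOfSurjective hsurj).finrank_eq

variable {P₁ : Module.Dual R M →ₗ[R] M} {P₂ : Module.Dual R N →ₗ[R] N} {φ : M →ₗ[R] N}

theorem map_dualAnnihilator_le_range (hφ : ∀ β, φ (P₁ (φ.dualMap β)) = P₂ β)
    (W : Submodule R N) : W.dualAnnihilator.map P₂ ≤ LinearMap.range φ := by
  rintro _ ⟨β, -, rfl⟩
  exact ⟨_, hφ β⟩

theorem codisjoint_comap_map_dualAnnihilator (hφ : ∀ β, φ (P₁ (φ.dualMap β)) = P₂ β)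
    {W : Submodule R N} (hW : Codisjoint W (W.dualAnnihilator.map P₂)) :
    Codisjoint (W.comap φ) ((W.comap φ).dualAnnihilator.map P₁) := by
  refine codisjoint_iff.mpr (eq_top_iff.mpr fun x _ => ?_)
  obtain ⟨w, hw, _, ⟨β, hβ, rfl⟩, hx⟩ := mem_sup.mp (hW.eq_top ▸ mem_top : φ x ∈ W ⊔ _)
  have hβ' : φ.dualMap β ∈ (W.comap φ).dualAnnihilator := by
    rw [SetLike.mem_coe, mem_dualAnnihilator] at hβ
    rw [mem_dualAnnihilator]
    exact fun u hu => hβ (φ u) hu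
  refine mem_sup.mpr ⟨x - P₁ (φ.dualMap β), ?_, _, ⟨_, hβ', rfl⟩, sub_add_cancel _ _⟩
  rw [mem_comap, map_sub, hφ, ← hx, add_sub_cancel_right]
  exact hw

end Submodule

theorem stmt6_general {K V₁ V₂ : Type*} [Field K]
    [AddCommGroup V₁] [Module K V₁]
    [AddCommGroup V₂] [Module K V₂]
    (φ : V₁ →ₗ[K] V₂)
    (P₁ : Module.Dual K V₁ →ₗ[K] V₁) (P₂ : Module.Dual K V₂ →ₗ[K] V₂)
    (hP₁ : ∀ α β : Module.Dual K V₁, α (P₁ β) = - β (P₁ α))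
    (hφ : ∀ β : Module.Dual K V₂, φ (P₁ (φ.dualMap β)) = P₂ β)
    (W : Submodule K V₂) (hcompl : IsCompl W (W.dualAnnihilator.map P₂)) :
    IsCompl (W.comap φ) ((W.comap φ).dualAnnihilator.map P₁) ∧
      Module.finrank K (V₁ ⧸ W.comap φ) = Module.finrank K (V₂ ⧸ W) :=
  ⟨Submodule.isCompl_map_dualAnnihilator_of_codisjoint hP₁
      (Submodule.codisjoint_comap_map_dualAnnihilator hφ hcompl.codisjoint),
    Submodule.finrank_quotient_comap_eq_of_codisjoint
      (hcompl.codisjoint.mono_right (Submodule.map_dualAnnihilator_le_range hφ W))⟩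

theorem stmt6 {K V₁ V₂ : Type*} [Field K]
    [AddCommGroup V₁] [Module K V₁] [FiniteDimensional K V₁]
    [AddCommGroup V₂] [Module K V₂] [FiniteDimensional K V₂]
    (φ : V₁ →ₗ[K] V₂)
    (P₁ : Module.Dual K V₁ →ₗ[K] V₁) (P₂ : Module.Dual K V₂ →ₗ[K] V₂)
    (hP₁ : ∀ α β : Module.Dual K V₁, α (P₁ β) = - β (P₁ α))
    (hP₂ : ∀ α β : Module.Dual K V₂, α (P₂ β) = - β (P₂ α))
    (hφ : ∀ β : Module.Dual K V₂, φ (P₁ (φ.dualMap β)) = P₂ β)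
    (W : Submodule K V₂) (hcompl : IsCompl W (W.dualAnnihilator.map P₂)) :
    IsCompl (W.comap φ) ((W.comap φ).dualAnnihilator.map P₁) ∧
      Module.finrank K (V₁ ⧸ W.comap φ) = Module.finrank K (V₂ ⧸ W) :=
  stmt6_general φ P₁ P₂ hP₁ hφ W hcompl
end
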